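/- Let p be an odd prime and n ≥ 1 with p^n ≡ 3 (mod 4) and χ(5) = −1, and let f(X) = X^{p^n−2} be the inverse function on F_{p^n}. Then the (−1)-differential spectrum of f satisfies ₋₁ω_0 = (p^n−3)/2, ₋₁ω_1 = 3, ₋₁ω_2 = (p^n−3)/2, and ₋₁ω_i = 0 for all i ≥ 3. -/

import Mathlib

open Finset

/-- The `c`-DDT entry of `f` at `(a, b)`:
the number of `x` with `f (x + a) - c * f x = b`. -/
def cDDT {F : Type*} [Field F] [Fintype F] [DecidableEq F]
    (f : F → F) (c a b : F) : ℕ :=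
  (Finset.univ.filter (fun x : F => f (x + a) - c * f x = b)).card

/-- The `c`-differential uniformity of `f`: the maximum of the `c`-DDT entries
over all `a, b`, where `a ≠ 0` is required when `c = 1`. -/
def cDU {F : Type*} [Field F] [Fintype F] [DecidableEq F]
    (f : F → F) (c : F) : ℕ :=
  (Finset.univ.filter (fun ab : F × F => c = 1 → ab.1 ≠ 0)).sup
    (fun ab => cDDT f c ab.1 ab.2)

/-- The classical differential uniformity of `f`. -/
def DU {F : Type*} [Field F] [Fintype F] [DecidableEq F] (f : F → F) : ℕ :=
  cDU f 1

/-- The BCT entry of `f` at `(a, b)`: the number of pairs `(x, y)` with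
`f x - f y = b` and `f (x + a) - f (y + a) = b`. -/
def BCT {F : Type*} [Field F] [Fintype F] [DecidableEq F]
    (f : F → F) (a b : F) : ℕ :=
  (Finset.univ.filter (fun xy : F × F =>
    f xy.1 - f xy.2 = b ∧ f (xy.1 + a) - f (xy.2 + a) = b)).card

/-- The boomerang uniformity of `f`: the maximum of the BCT entries over all
nonzero `a, b`. -/
def BU {F : Type*} [Field F] [Fintype F] [DecidableEq F] (f : F → F) : ℕ :=
  (Finset.univ.filter (fun ab : F × F => ab.1 ≠ 0 ∧ ab.2 ≠ 0)).sup
    (fun ab => BCT f ab.1 ab.2)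

/-- The quadratic character: `χ 0 = 0`, `χ α = 1` if `α` is a nonzero square,
and `χ α = -1` otherwise. -/
noncomputable def chi {F : Type*} [Field F] (α : F) : ℤ :=
  letI := Classical.dec (α = 0)
  letI := Classical.dec (IsSquare α)
  if α = 0 then 0 else if IsSquare α then 1 else -1

/-- The `c`-differential spectrum entry `ω_i` of a power function:
the number of `b` with `cΔ_f(1, b) = i`. -/
def omegaSpec {F : Type*} [Field F] [Fintype F] [DecidableEq F]
    (f : F → F) (c : F) (i : ℕ) : ℕ :=
  (Finset.univ.filter (fun b : F => cDDT f c 1 b = i)).card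

/-- The boomerang spectrum entry `v_i` of a power function:
the number of nonzero `b` with `B_f(1, b) = i`. -/
def vSpec {F : Type*} [Field F] [Fintype F] [DecidableEq F]
    (f : F → F) (i : ℕ) : ℕ :=
  (Finset.univ.filter (fun b : F => b ≠ 0 ∧ BCT f 1 b = i)).card

/-!
Off `x ∈ {0, -1}`, the equation `(x + 1)⁻¹ + x⁻¹ = b` is the quadratic
`b x² + (b - 2) x - 1 = 0`, of discriminant `b² + 4`. Since `p ^ n ≡ 3 (mod 4)`, `-1` is a
non-square, so `b² + 4 ≠ 0` and every `b ∉ {0, 1, -1}` has `0` or `2` solutions. The value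
`b = 0` has the single solution `-1/2`, and `b = 1` (resp. `b = -1`) only the solution `0`
(resp. `-1`), because the quadratic then has discriminant `5`, a non-square. Hence `ω₁ = 3`,
and `ω₀ + ω₁ + ω₂ = ω₁ + 2 ω₂ = p ^ n` gives the rest.
-/

theorem pow_card_sub_two_eq_inv {F : Type*} [Field F] [Fintype F] (hq : 2 < Fintype.card F)
    (x : F) : x ^ (Fintype.card F - 2) = x⁻¹ := by
  rcases eq_or_ne x 0 with rfl | hx
  · rw [inv_zero, zero_pow (by omega)]
  · refine eq_inv_of_mul_eq_one_left ?_
    rw [← pow_succ, show Fintype.card F - 2 + 1 = Fintype.card F - 1 by omega]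
    exact FiniteField.pow_card_sub_one_eq_one x hx

theorem not_isSquare_of_chi_eq_neg_one {F : Type*} [Field F] {α : F} (h : chi α = -1) :
    ¬IsSquare α := by
  intro hsq
  unfold chi at h
  split_ifs at h

theorem card_filter_quadratic_eq_zero_eq_zero_or_two {K : Type*} [Field K] [Fintype K]
    [DecidableEq K] [NeZero (2 : K)] {a b c : K} (ha : a ≠ 0) (hd : discrim a b c ≠ 0) :
    #{x | a * (x * x) + b * x + c = 0} = 0 ∨ #{x | a * (x * x) + b * x + c = 0} = 2 := by
  by_cases hsq : IsSquare (discrim a b c)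
  · obtain ⟨s, hs⟩ := hsq
    have hs0 : s ≠ 0 := by rintro rfl; simp_all
    have hroots : univ.filter (fun x : K => a * (x * x) + b * x + c = 0)
        = {(-b + s) / (2 * a), (-b - s) / (2 * a)} := by
      ext x
      simp [quadratic_eq_zero_iff ha hs]
    have hne : (-b + s) / (2 * a) ≠ (-b - s) / (2 * a) := by
      rw [Ne, div_left_inj' (mul_ne_zero two_ne_zero ha)]
      intro h
      have h2s : 2 * s = 0 := by linear_combination h
      exact hs0 ((mul_eq_zero.1 h2s).resolve_left two_ne_zero)
    exact Or.inr (by rw [hroots, card_pair hne])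
  · refine Or.inl (card_eq_zero.2 (filter_eq_empty_iff.2 fun x _ => ?_))
    exact quadratic_ne_zero_of_discrim_ne_sq (fun s h => hsq ⟨s, by rw [h, sq]⟩) x

theorem one_ne_neg_one_of_two_ne_zero {R : Type*} [CommRing R] [NeZero (2 : R)] :
    (1 : R) ≠ -1 :=
  fun h => (two_ne_zero : (2 : R) ≠ 0) (by linear_combination h)

theorem inv_add_one_add_inv_eq_iff {K : Type*} [Field K] (x b : K) :
    (x + 1)⁻¹ + x⁻¹ = b ↔
      b * (x * x) + (b - 2) * x - 1 = 0 ∨ x = 0 ∧ b = 1 ∨ x = -1 ∧ b = -1 := by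
  rcases eq_or_ne x 0 with rfl | hx0
  · simp [eq_comm]
  rcases eq_or_ne x (-1) with rfl | hx1
  · norm_num [eq_comm]
  have hx1' : x + 1 ≠ 0 := fun h => hx1 (eq_neg_of_add_eq_zero_left h)
  simp only [hx0, hx1, false_and, or_false]
  field_simp
  constructor <;> intro h <;> linear_combination -h

theorem inv_fiber_quadratic_ne_zero {K : Type*} [Field K] (h5 : ¬IsSquare (5 : K)) {b : K}
    (hb : b ^ 2 = 1) (x : K) :
    b * (x * x) + (b - 2) * x - 1 ≠ 0 := by
  rw [sub_eq_add_neg _ (1 : K)]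
  refine quadratic_ne_zero_of_discrim_ne_sq (fun s hs => h5 ⟨s, ?_⟩) x
  rw [← sq, ← hs, discrim]
  linear_combination -hb

section Spectrum

variable {F : Type*} [Field F] [Fintype F] [DecidableEq F]

theorem sum_cDDT_eq_card (f : F → F) (c a : F) : ∑ b, cDDT f c a b = Fintype.card F :=
  (card_eq_sum_card_fiberwise (fun x _ => mem_univ (f (x + a) - c * f x))).symm

theorem omegaSpec_one_add_two_mul_omegaSpec_two {f : F → F} {c : F}
    (h : ∀ b, cDDT f c 1 b ≤ 2) :
    omegaSpec f c 1 + 2 * omegaSpec f c 2 = Fintype.card F := by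
  rw [← sum_cDDT_eq_card f c 1, omegaSpec, omegaSpec, card_filter, card_filter, mul_sum,
    ← sum_add_distrib]
  refine sum_congr rfl fun b _ => ?_
  have := h b
  split_ifs <;> omega

theorem omegaSpec_zero_add_omegaSpec_one_add_omegaSpec_two {f : F → F} {c : F}
    (h : ∀ b, cDDT f c 1 b ≤ 2) :
    omegaSpec f c 0 + omegaSpec f c 1 + omegaSpec f c 2 = Fintype.card F := by
  rw [← card_univ, card_eq_sum_ones, omegaSpec, omegaSpec, omegaSpec, card_filter, card_filter,
    card_filter, ← sum_add_distrib, ← sum_add_distrib]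
  refine sum_congr rfl fun b _ => ?_
  have := h b
  split_ifs <;> omega

theorem omegaSpec_eq_zero_of_lt {f : F → F} {c : F} {m i : ℕ} (h : ∀ b, cDDT f c 1 b ≤ m)
    (hi : m < i) : omegaSpec f c i = 0 :=
  card_eq_zero.2 (filter_eq_empty_iff.2 fun b _ => by have := h b; omega)

end Spectrum

section InverseFunction

variable {F : Type*} [Field F] [Fintype F] [DecidableEq F]

theorem cDDT_inv_neg_one (b : F) :
    cDDT (fun x : F => x⁻¹) (-1) 1 b = #{x | (x + 1)⁻¹ + x⁻¹ = b} := by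
  simp [cDDT]

theorem cDDT_inv_neg_one_zero [NeZero (2 : F)] : cDDT (fun x : F => x⁻¹) (-1) 1 0 = 1 := by
  rw [cDDT_inv_neg_one, card_eq_one]
  refine ⟨-2⁻¹, ?_⟩
  ext x
  simp only [mem_filter, mem_univ, true_and, mem_singleton, inv_add_one_add_inv_eq_iff, zero_mul,
    zero_sub, zero_add, zero_ne_one, and_false, zero_eq_neg, one_ne_zero, or_false]
  constructor
  · intro h
    field_simp
    linear_combination -h
  · rintro rfl
    field_simp
    ring

theorem cDDT_inv_neg_one_one [NeZero (2 : F)] (h5 : ¬IsSquare (5 : F)) :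
    cDDT (fun x : F => x⁻¹) (-1) 1 1 = 1 := by
  rw [cDDT_inv_neg_one, card_eq_one]
  refine ⟨0, ?_⟩
  ext x
  simp only [mem_filter, mem_univ, true_and, mem_singleton, inv_add_one_add_inv_eq_iff,
    inv_fiber_quadratic_ne_zero h5 (one_pow 2), false_or]
  simp [one_ne_neg_one_of_two_ne_zero]

theorem cDDT_inv_neg_one_neg_one [NeZero (2 : F)] (h5 : ¬IsSquare (5 : F)) :
    cDDT (fun x : F => x⁻¹) (-1) 1 (-1) = 1 := by
  rw [cDDT_inv_neg_one, card_eq_one]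
  refine ⟨-1, ?_⟩
  ext x
  simp only [mem_filter, mem_univ, true_and, mem_singleton, inv_add_one_add_inv_eq_iff,
    inv_fiber_quadratic_ne_zero h5 (neg_one_sq : (-1 : F) ^ 2 = 1), false_or]
  simp [one_ne_neg_one_of_two_ne_zero.symm]

theorem cDDT_inv_neg_one_eq_zero_or_two [NeZero (2 : F)] (hneg : ¬IsSquare (-1 : F)) {b : F}
    (hb0 : b ≠ 0) (hb1 : b ≠ 1) (hbn1 : b ≠ -1) :
    cDDT (fun x : F => x⁻¹) (-1) 1 b = 0 ∨ cDDT (fun x : F => x⁻¹) (-1) 1 b = 2 := by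
  have hd : discrim b (b - 2) (-1) ≠ 0 := by
    intro hd
    rw [discrim] at hd
    refine hneg ⟨b / 2, ?_⟩
    field_simp
    linear_combination -hd
  have hfiber : univ.filter (fun x : F => (x + 1)⁻¹ + x⁻¹ = b)
      = univ.filter (fun x : F => b * (x * x) + (b - 2) * x + -1 = 0) := by
    ext x
    simp [inv_add_one_add_inv_eq_iff, sub_eq_add_neg, hb1, hbn1]
  rw [cDDT_inv_neg_one, hfiber]
  exact card_filter_quadratic_eq_zero_eq_zero_or_two hb0 hd

theorem cDDT_inv_neg_one_eq_one_iff [NeZero (2 : F)] (hneg : ¬IsSquare (-1 : F))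
    (h5 : ¬IsSquare (5 : F)) (b : F) :
    cDDT (fun x : F => x⁻¹) (-1) 1 b = 1 ↔ b = 0 ∨ b = 1 ∨ b = -1 := by
  by_cases hb : b = 0 ∨ b = 1 ∨ b = -1
  · rcases hb with rfl | rfl | rfl
    · simp [cDDT_inv_neg_one_zero]
    · simp [cDDT_inv_neg_one_one h5]
    · simp [cDDT_inv_neg_one_neg_one h5]
  · simp only [not_or] at hb
    obtain ⟨hb0, hb1, hbn1⟩ := hb
    rcases cDDT_inv_neg_one_eq_zero_or_two hneg hb0 hb1 hbn1 with h | h <;>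
      simp [h, hb0, hb1, hbn1]

theorem cDDT_inv_neg_one_le_two [NeZero (2 : F)] (hneg : ¬IsSquare (-1 : F))
    (h5 : ¬IsSquare (5 : F)) (b : F) : cDDT (fun x : F => x⁻¹) (-1) 1 b ≤ 2 := by
  by_cases hb : b = 0 ∨ b = 1 ∨ b = -1
  · rw [(cDDT_inv_neg_one_eq_one_iff hneg h5 b).2 hb]
    exact one_le_two
  · simp only [not_or] at hb
    obtain ⟨hb0, hb1, hbn1⟩ := hb
    rcases cDDT_inv_neg_one_eq_zero_or_two hneg hb0 hb1 hbn1 with h | h <;> omega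

theorem omegaSpec_inv_neg_one_one [NeZero (2 : F)] (hneg : ¬IsSquare (-1 : F))
    (h5 : ¬IsSquare (5 : F)) : omegaSpec (fun x : F => x⁻¹) (-1) 1 = 3 := by
  have hT : univ.filter (fun b : F => cDDT (fun x : F => x⁻¹) (-1) 1 b = 1) = {0, 1, -1} := by
    ext b
    simp [cDDT_inv_neg_one_eq_one_iff hneg h5]
  rw [omegaSpec, hT, card_insert_of_notMem, card_pair one_ne_neg_one_of_two_ne_zero]
  simp

end InverseFunction

theorem neg_one_spectrum_inverse_three_mod_four_chi_five_neg_one_general (p n : ℕ)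
    {F : Type*} [Field F] [Fintype F] [DecidableEq F]
    (hF : Fintype.card F = p ^ n)
    (hmod : p ^ n % 4 = 3) (hchi : chi (5 : F) = -1)
    (f : F → F) (hf : ∀ x : F, f x = x ^ (p ^ n - 2)) :
    omegaSpec f (-1) 0 = (p ^ n - 3) / 2 ∧ omegaSpec f (-1) 1 = 3 ∧
    omegaSpec f (-1) 2 = (p ^ n - 3) / 2 ∧
    ∀ i : ℕ, 3 ≤ i → omegaSpec f (-1) i = 0 := by
  have hneg : ¬IsSquare (-1 : F) := by
    rw [FiniteField.isSquare_neg_one_iff, hF]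
    omega
  have : NeZero (2 : F) := ⟨fun h => hneg ⟨1, by linear_combination -h⟩⟩
  have h5 := not_isSquare_of_chi_eq_neg_one hchi
  obtain rfl : f = fun x => x⁻¹ :=
    funext fun x => by rw [hf, ← hF, pow_card_sub_two_eq_inv (by omega)]
  have hle := cDDT_inv_neg_one_le_two hneg h5
  have hω1 := omegaSpec_inv_neg_one_one hneg h5
  have hsum := omegaSpec_one_add_two_mul_omegaSpec_two hle
  have hcount := omegaSpec_zero_add_omegaSpec_one_add_omegaSpec_two hle
  rw [hF] at hsum hcount
  exact ⟨by omega, hω1, by omega, fun i hi => omegaSpec_eq_zero_of_lt hle hi⟩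

theorem neg_one_spectrum_inverse_three_mod_four_chi_five_neg_one (p n : ℕ) (hp : p.Prime) (hpodd : Odd p) (hn : 1 ≤ n)
    {F : Type*} [Field F] [Fintype F] [DecidableEq F]
    (hF : Fintype.card F = p ^ n)
    (hmod : p ^ n % 4 = 3) (hchi : chi (5 : F) = -1)
    (f : F → F) (hf : ∀ x : F, f x = x ^ (p ^ n - 2)) :
    omegaSpec f (-1) 0 = (p ^ n - 3) / 2 ∧ omegaSpec f (-1) 1 = 3 ∧
    omegaSpec f (-1) 2 = (p ^ n - 3) / 2 ∧
    ∀ i : ℕ, 3 ≤ i → omegaSpec f (-1) i = 0 :=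
  neg_one_spectrum_inverse_three_mod_four_chi_five_neg_one_general p n hF hmod hchi f hf
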